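/- Let (Y1(0), Y2(0), S1, S2, D1, D2) be random variables with finite second moments such that (D1, D2) is independent of (Y1(0), Y2(0), S1, S2). Define Yt = Yt(0) + St·Dt, ΔY = Y2 − Y1, ΔD = D2 − D1, and assume V(ΔD) > 0. Then cov(ΔD, ΔY)/V(ΔD) = Σ_{t=1}^{2} w_t·E(S_t), where w_t = (V(D_t) − cov(D1, D2)) / (V(D1) + V(D2) − 2·cov(D1, D2)). -/

import Mathlib

open MeasureTheory ProbabilityTheory
open scoped ENNReal

noncomputable def cov {Ω : Type*} [MeasurableSpace Ω] (μ : Measure Ω) (X Y : Ω → ℝ) : ℝ :=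
  ∫ ω, (X ω - ∫ x, X x ∂μ) * (Y ω - ∫ x, Y x ∂μ) ∂μ

noncomputable def var {Ω : Type*} [MeasurableSpace Ω] (μ : Measure Ω) (X : Ω → ℝ) : ℝ :=
  cov μ X X

/-- Conditional expectation of `X` given the σ-algebra generated by `W`. -/
noncomputable def cexp {Ω E : Type*} [MeasurableSpace Ω] [MeasurableSpace E]
    (μ : Measure Ω) (W : Ω → E) (X : Ω → ℝ) : Ω → ℝ :=
  μ[X | MeasurableSpace.comap W inferInstance]

/-- Conditional variance of `X` given the σ-algebra generated by `W`. -/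
noncomputable def cvar {Ω E : Type*} [MeasurableSpace Ω] [MeasurableSpace E]
    (μ : Measure Ω) (W : Ω → E) (X : Ω → ℝ) : Ω → ℝ :=
  cexp μ W (fun ω => (X ω - cexp μ W X ω) ^ 2)

lemma int_mul' {Ω : Type*} [MeasurableSpace Ω] {μ : Measure Ω} {f g : Ω → ℝ}
    (hf : MemLp f 2 μ) (hg : MemLp g 2 μ) : Integrable (fun ω => f ω * g ω) μ := by
  rw [← memLp_one_iff_integrable]
  have h121 : (1:ℝ≥0∞)/1 = 1/2 + 1/2 := by
    rw [ENNReal.div_add_div_same, div_one, one_add_one_eq_two,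
      ENNReal.div_self (by norm_num) (by norm_num)]
  exact MemLp.smul (r := 1) hg hf

lemma cov_eq' {Ω : Type*} [MeasurableSpace Ω] (μ : Measure Ω) [IsProbabilityMeasure μ]
    {X Y : Ω → ℝ} (hX : Integrable X μ) (hY : Integrable Y μ)
    (hXY : Integrable (fun ω => X ω * Y ω) μ) :
    cov μ X Y = (∫ ω, X ω * Y ω ∂μ) - (∫ ω, X ω ∂μ) * (∫ ω, Y ω ∂μ) := by
  unfold cov
  set a := ∫ ω, X ω ∂μ with ha
  set b := ∫ ω, Y ω ∂μ with hb
  have h : (fun ω => (X ω - a) * (Y ω - b))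
      = fun ω => (X ω * Y ω - a * Y ω) - (b * X ω - a * b) := funext fun ω => by ring
  have i1 : Integrable (fun ω => X ω * Y ω - a * Y ω) μ := hXY.sub (hY.const_mul a)
  have i2 : Integrable (fun ω => b * X ω - a * b) μ :=
    (hX.const_mul b).sub (integrable_const _)
  rw [h, integral_sub i1 i2, integral_sub hXY (hY.const_mul a),
    integral_sub (hX.const_mul b) (integrable_const _),
    integral_const_mul, integral_const_mul, integral_const]
  simp only [probReal_univ, ENNReal.toReal_one, one_smul, ← ha, ← hb]
  ring

/-- Under randomly assigned treatment paths, `β` is a weighted sum of `E(S1)` and `E(S2)`. -/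
theorem stmt2 {Ω : Type*} [MeasurableSpace Ω] (μ : Measure Ω) [IsProbabilityMeasure μ]
    (Y10 Y20 S1 S2 D1 D2 : Ω → ℝ)
    (hY10 : MemLp Y10 2 μ) (hY20 : MemLp Y20 2 μ) (hS1 : MemLp S1 2 μ)
    (hS2 : MemLp S2 2 μ) (hD1 : MemLp D1 2 μ) (hD2 : MemLp D2 2 μ)
    (hind : IndepFun (fun ω => (D1 ω, D2 ω))
      (fun ω => (Y10 ω, Y20 ω, S1 ω, S2 ω)) μ)
    (hvar : 0 < var μ (fun ω => D2 ω - D1 ω)) :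
    cov μ (fun ω => D2 ω - D1 ω)
        (fun ω => (Y20 ω + S2 ω * D2 ω) - (Y10 ω + S1 ω * D1 ω)) /
      var μ (fun ω => D2 ω - D1 ω)
    = (var μ D1 - cov μ D1 D2) / (var μ D1 + var μ D2 - 2 * cov μ D1 D2)
        * (∫ ω, S1 ω ∂μ)
      + (var μ D2 - cov μ D1 D2) / (var μ D1 + var μ D2 - 2 * cov μ D1 D2)
        * (∫ ω, S2 ω ∂μ) := by
  have iD1 : Integrable D1 μ := hD1.integrable one_le_two
  have iD2 : Integrable D2 μ := hD2.integrable one_le_two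
  have iS1 : Integrable S1 μ := hS1.integrable one_le_two
  have iS2 : Integrable S2 μ := hS2.integrable one_le_two
  have iY10 : Integrable Y10 μ := hY10.integrable one_le_two
  have iY20 : Integrable Y20 μ := hY20.integrable one_le_two
  have hΔD : MemLp (fun ω => D2 ω - D1 ω) 2 μ := hD2.sub hD1
  have hYd : MemLp (fun ω => Y20 ω - Y10 ω) 2 μ := hY20.sub hY10
  set a1 := ∫ ω, D1 ω ∂μ with ha1
  set a2 := ∫ ω, D2 ω ∂μ with ha2
  set s1 := ∫ ω, S1 ω ∂μ with hs1
  set s2 := ∫ ω, S2 ω ∂μ with hs2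
  set y1 := ∫ ω, Y10 ω ∂μ with hy1
  set y2 := ∫ ω, Y20 ω ∂μ with hy2
  set m11 := ∫ ω, D1 ω * D1 ω ∂μ with hm11
  set m22 := ∫ ω, D2 ω * D2 ω ∂μ with hm22
  set m12 := ∫ ω, D1 ω * D2 ω ∂μ with hm12
  -- independence facts
  have hcomp : ∀ (φ : ℝ × ℝ → ℝ) (ψ : ℝ × ℝ × ℝ × ℝ → ℝ), Measurable φ → Measurable ψ →
      IndepFun (fun ω => φ (D1 ω, D2 ω)) (fun ω => ψ (Y10 ω, Y20 ω, S1 ω, S2 ω)) μ :=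
    fun φ ψ hφ hψ => hind.comp hφ hψ
  have I1 : IndepFun (fun ω => (D2 ω - D1 ω) * D1 ω) S1 μ :=
    hcomp (fun p => (p.2 - p.1) * p.1) (fun q => q.2.2.1)
      ((measurable_snd.sub measurable_fst).mul measurable_fst) measurable_snd.snd.fst
  have I2 : IndepFun (fun ω => (D2 ω - D1 ω) * D2 ω) S2 μ :=
    hcomp (fun p => (p.2 - p.1) * p.2) (fun q => q.2.2.2)
      ((measurable_snd.sub measurable_fst).mul measurable_snd) measurable_snd.snd.snd
  have I3 : IndepFun D1 S1 μ :=
    hcomp (fun p => p.1) (fun q => q.2.2.1) measurable_fst measurable_snd.snd.fst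
  have I4 : IndepFun D2 S2 μ :=
    hcomp (fun p => p.2) (fun q => q.2.2.2) measurable_snd measurable_snd.snd.snd
  have I5 : IndepFun (fun ω => D2 ω - D1 ω) (fun ω => Y20 ω - Y10 ω) μ :=
    hcomp (fun p => p.2 - p.1) (fun q => q.2.1 - q.1)
      (measurable_snd.sub measurable_fst) (measurable_snd.fst.sub measurable_fst)
  -- integrability of products
  have iΔ : Integrable (fun ω => D2 ω - D1 ω) μ := iD2.sub iD1
  have iYd : Integrable (fun ω => Y20 ω - Y10 ω) μ := iY20.sub iY10
  have iDD1 : Integrable (fun ω => (D2 ω - D1 ω) * D1 ω) μ := int_mul' hΔD hD1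
  have iDD2 : Integrable (fun ω => (D2 ω - D1 ω) * D2 ω) μ := int_mul' hΔD hD2
  have iS1D1 : Integrable (fun ω => S1 ω * D1 ω) μ := int_mul' hS1 hD1
  have iS2D2 : Integrable (fun ω => S2 ω * D2 ω) μ := int_mul' hS2 hD2
  have iDY : Integrable (fun ω => (D2 ω - D1 ω) * (Y20 ω - Y10 ω)) μ := int_mul' hΔD hYd
  have iT1 : Integrable (fun ω => ((D2 ω - D1 ω) * D1 ω) * S1 ω) μ :=
    I1.integrable_mul iDD1 iS1
  have iT2 : Integrable (fun ω => ((D2 ω - D1 ω) * D2 ω) * S2 ω) μ :=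
    I2.integrable_mul iDD2 iS2
  -- product expectations
  have E1 : ∫ ω, ((D2 ω - D1 ω) * D1 ω) * S1 ω ∂μ
      = (∫ ω, (D2 ω - D1 ω) * D1 ω ∂μ) * s1 := I1.integral_fun_mul_eq_mul_integral iDD1.1 iS1.1
  have E2 : ∫ ω, ((D2 ω - D1 ω) * D2 ω) * S2 ω ∂μ
      = (∫ ω, (D2 ω - D1 ω) * D2 ω ∂μ) * s2 := I2.integral_fun_mul_eq_mul_integral iDD2.1 iS2.1
  have E3 : ∫ ω, S1 ω * D1 ω ∂μ = s1 * a1 := I3.symm.integral_fun_mul_eq_mul_integral iS1.1 iD1.1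
  have E4 : ∫ ω, S2 ω * D2 ω ∂μ = s2 * a2 := I4.symm.integral_fun_mul_eq_mul_integral iS2.1 iD2.1
  have E5 : ∫ ω, (D2 ω - D1 ω) * (Y20 ω - Y10 ω) ∂μ
      = (∫ ω, D2 ω - D1 ω ∂μ) * (∫ ω, Y20 ω - Y10 ω ∂μ) :=
    I5.integral_fun_mul_eq_mul_integral iΔ.1 iYd.1
  -- basic integrals
  have eΔ : ∫ ω, D2 ω - D1 ω ∂μ = a2 - a1 := integral_sub iD2 iD1
  have eY : ∫ ω, Y20 ω - Y10 ω ∂μ = y2 - y1 := integral_sub iY20 iY10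
  -- moment expansions
  have eDD1 : ∫ ω, (D2 ω - D1 ω) * D1 ω ∂μ = m12 - m11 := by
    rw [show (fun ω => (D2 ω - D1 ω) * D1 ω)
        = fun ω => D1 ω * D2 ω - D1 ω * D1 ω from funext fun ω => by ring]
    exact integral_sub (int_mul' hD1 hD2) (int_mul' hD1 hD1)
  have eDD2 : ∫ ω, (D2 ω - D1 ω) * D2 ω ∂μ = m22 - m12 := by
    rw [show (fun ω => (D2 ω - D1 ω) * D2 ω)
        = fun ω => D2 ω * D2 ω - D1 ω * D2 ω from funext fun ω => by ring]
    exact integral_sub (int_mul' hD2 hD2) (int_mul' hD1 hD2)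
  have eΔΔ : ∫ ω, (D2 ω - D1 ω) * (D2 ω - D1 ω) ∂μ = m22 - 2 * m12 + m11 := by
    rw [show (fun ω => (D2 ω - D1 ω) * (D2 ω - D1 ω))
        = fun ω => (D2 ω * D2 ω - 2 * (D1 ω * D2 ω)) + D1 ω * D1 ω from
        funext fun ω => by ring]
    have j2 : Integrable (fun ω => 2 * (D1 ω * D2 ω)) μ := (int_mul' hD1 hD2).const_mul 2
    have j1 : Integrable (fun ω => D2 ω * D2 ω - 2 * (D1 ω * D2 ω)) μ :=
      (int_mul' hD2 hD2).sub j2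
    rw [integral_add j1 (int_mul' hD1 hD1), integral_sub (int_mul' hD2 hD2) j2,
      integral_const_mul]
  -- cov/var in moment form
  have hc12 : cov μ D1 D2 = m12 - a1 * a2 := cov_eq' μ iD1 iD2 (int_mul' hD1 hD2)
  have hv1 : var μ D1 = m11 - a1 * a1 := cov_eq' μ iD1 iD1 (int_mul' hD1 hD1)
  have hv2 : var μ D2 = m22 - a2 * a2 := cov_eq' μ iD2 iD2 (int_mul' hD2 hD2)
  have hvΔ : var μ (fun ω => D2 ω - D1 ω)
      = (m22 - 2 * m12 + m11) - (a2 - a1) * (a2 - a1) := by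
    unfold var
    rw [cov_eq' μ iΔ iΔ (int_mul' hΔD hΔD), eΔΔ, eΔ]
  -- numerator pieces
  have iA1 : Integrable (fun ω => Y20 ω + S2 ω * D2 ω) μ := iY20.add iS2D2
  have iA2 : Integrable (fun ω => Y10 ω + S1 ω * D1 ω) μ := iY10.add iS1D1
  have iΔY : Integrable (fun ω => (Y20 ω + S2 ω * D2 ω) - (Y10 ω + S1 ω * D1 ω)) μ :=
    iA1.sub iA2
  have iNum : Integrable
      (fun ω => (D2 ω - D1 ω) * ((Y20 ω + S2 ω * D2 ω) - (Y10 ω + S1 ω * D1 ω))) μ :=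
    ((iDY.add iT2).sub iT1).congr
      (ae_of_all _ fun ω => by simp only [Pi.add_apply, Pi.sub_apply]; ring)
  have eNum : ∫ ω, (D2 ω - D1 ω) * ((Y20 ω + S2 ω * D2 ω) - (Y10 ω + S1 ω * D1 ω)) ∂μ
      = (a2 - a1) * (y2 - y1) + (m22 - m12) * s2 - (m12 - m11) * s1 := by
    rw [show (fun ω => (D2 ω - D1 ω) * ((Y20 ω + S2 ω * D2 ω) - (Y10 ω + S1 ω * D1 ω)))
        = fun ω => ((D2 ω - D1 ω) * (Y20 ω - Y10 ω) + ((D2 ω - D1 ω) * D2 ω) * S2 ω)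
            - ((D2 ω - D1 ω) * D1 ω) * S1 ω from funext fun ω => by ring]
    have k1 : Integrable (fun ω => (D2 ω - D1 ω) * (Y20 ω - Y10 ω)
        + ((D2 ω - D1 ω) * D2 ω) * S2 ω) μ := iDY.add iT2
    rw [integral_sub k1 iT1, integral_add iDY iT2, E5, E2, E1, eΔ, eY, eDD1, eDD2]
  have eEY : ∫ ω, (Y20 ω + S2 ω * D2 ω) - (Y10 ω + S1 ω * D1 ω) ∂μ
      = ((y2 - y1) + s2 * a2) - s1 * a1 := by
    rw [show (fun ω => (Y20 ω + S2 ω * D2 ω) - (Y10 ω + S1 ω * D1 ω))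
        = fun ω => ((Y20 ω - Y10 ω) + S2 ω * D2 ω) - S1 ω * D1 ω from
        funext fun ω => by ring]
    have k2 : Integrable (fun ω => (Y20 ω - Y10 ω) + S2 ω * D2 ω) μ := iYd.add iS2D2
    rw [integral_sub k2 iS1D1, integral_add iYd iS2D2, integral_sub iY20 iY10, E4, E3]
  -- put it together
  have hCov : cov μ (fun ω => D2 ω - D1 ω)
      (fun ω => (Y20 ω + S2 ω * D2 ω) - (Y10 ω + S1 ω * D1 ω))
      = ((a2 - a1) * (y2 - y1) + (m22 - m12) * s2 - (m12 - m11) * s1)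
        - (a2 - a1) * (((y2 - y1) + s2 * a2) - s1 * a1) := by
    rw [cov_eq' μ iΔ iΔY iNum, eNum, eEY, eΔ]
  rw [hCov, hvΔ, hv1, hv2, hc12]
  rw [hvΔ] at hvar
  have hne : (m22 - 2 * m12 + m11) - (a2 - a1) * (a2 - a1) ≠ 0 := ne_of_gt hvar
  have hD : m11 - a1 * a1 + (m22 - a2 * a2) - 2 * (m12 - a1 * a2)
      = (m22 - 2 * m12 + m11) - (a2 - a1) * (a2 - a1) := by ring
  rw [hD]
  field_simp
  ring
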